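/- Let A_1, …, A_m be Hermitian positive semidefinite d×d complex matrices. Then the mixed characteristic polynomial μ[A_1, …, A_m](x) = (∏_{i=1}^m (1 − ∂_{z_i})) det(xI + ∑_{i=1}^m z_i A_i) |_{z_1 = … = z_m = 0} has all real roots. -/

import Mathlib

open Polynomial Matrix
open scoped ComplexOrder

/-- The multivariate polynomial `det(x I + ∑ i, z i • A i)`, in the variables
`none = x` and `some i = z i`. -/
noncomputable def detPoly {d m : ℕ} (A : Fin m → Matrix (Fin d) (Fin d) ℂ) :
    MvPolynomial (Option (Fin m)) ℂ :=
  ((MvPolynomial.X (none : Option (Fin m)) : MvPolynomial (Option (Fin m)) ℂ) •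
      (1 : Matrix (Fin d) (Fin d) (MvPolynomial (Option (Fin m)) ℂ)) +
    ∑ i : Fin m, (MvPolynomial.X (some i) : MvPolynomial (Option (Fin m)) ℂ) •
      (A i).map MvPolynomial.C).det

/-- The differential operator `∏ i (1 - ∂_{z i})`. -/
noncomputable def mixedOp (m : ℕ) :
    Module.End ℂ (MvPolynomial (Option (Fin m)) ℂ) :=
  (List.ofFn (fun i : Fin m =>
    (1 : Module.End ℂ (MvPolynomial (Option (Fin m)) ℂ)) -
      (MvPolynomial.pderiv (some i)).toLinearMap)).prod

/-- The mixed characteristic polynomial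
`μ[A₁,…,A_m](x) = ∏ i (1 - ∂_{z i}) det(xI + ∑ i z i A i) |_{z=0}`,
obtained by substituting `x ↦ X` and `z i ↦ 0`. -/
noncomputable def mixedCharPoly {d m : ℕ}
    (A : Fin m → Matrix (Fin d) (Fin d) ℂ) : Polynomial ℂ :=
  MvPolynomial.aeval (fun o : Option (Fin m) =>
      match o with
      | none => (Polynomial.X : Polynomial ℂ)
      | some _ => (0 : Polynomial ℂ))
    (mixedOp m (detPoly A))

/-!
Call `P(x, z)` stable for the sign `s` if it does not vanish when `s * Im x > 0` and
`s * Im zᵢ ≥ 0` for all `i`. For positive semidefinite `Aᵢ`, `det (x I + ∑ zᵢ Aᵢ)` is stable for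
every `s`: a kernel vector `w` of `M = x I + ∑ zᵢ Aᵢ` would give
`0 = s * Im (w* M w) = s * Im x ‖w‖² + ∑ s * Im zᵢ (w* Aᵢ w) > 0`.
Each `1 - ∂_{zᵢ}` preserves stability: along the line in `zᵢ`, a polynomial `q` with no zero in
the closed half-plane has `q'/q (z) = ∑_r 1/(z - r)` there, a sum of terms with `s * Im < 0`,
which therefore never equals `1`, so `q - q'` has no zero there either. Setting `z = 0` keeps `x`
in the open half-plane, so `μ` has no zero with `s * Im x > 0`; taking `s = Im x` excludes every
non-real root.
-/

lemma Complex.im_multiset_sum (M : Multiset ℂ) : M.sum.im = (M.map Complex.im).sum :=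
  map_multiset_sum Complex.imAddGroupHom M

lemma Complex.im_mul_of_nonneg {c : ℂ} (hc : 0 ≤ c) (y : ℂ) : (y * c).im = y.im * c.re := by
  rw [Complex.mul_im, ← (Complex.nonneg_iff.1 hc).2, mul_zero, zero_add]

lemma Complex.mul_im_inv_neg {s : ℝ} {w : ℂ} (hw : 0 < s * w.im) : s * w⁻¹.im < 0 := by
  have hw0 : w ≠ 0 := by rintro rfl; simp at hw
  rw [Complex.inv_im, neg_div, mul_neg, neg_lt_zero, mul_div_assoc']
  exact div_pos hw (Complex.normSq_pos.2 hw0)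

lemma Polynomial.eval_sub_derivative_ne_zero {s : ℝ} {q : ℂ[X]}
    (hq : ∀ z : ℂ, 0 ≤ s * z.im → q.eval z ≠ 0) {z : ℂ} (hz : 0 ≤ s * z.im) :
    (q - derivative q).eval z ≠ 0 := by
  have hqz := hq z hz
  have hroots : ∀ r ∈ q.roots, s * (1 / (z - r)).im < 0 := fun r hr ↦ by
    have hr : s * r.im < 0 := by
      by_contra! h
      exact hq r h (isRoot_of_mem_roots hr)
    rw [one_div]
    exact Complex.mul_im_inv_neg (by rw [Complex.sub_im]; linarith)
  rw [eval_sub, sub_ne_zero, (IsAlgClosed.splits q).eval_derivative_eq_eval_mul_sum hqz]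
  intro h
  have hsum : (q.roots.map fun r ↦ 1 / (z - r)).sum = 1 := (mul_eq_left₀ hqz).1 h.symm
  rcases eq_or_ne q.roots 0 with h0 | h0
  · simp [h0] at hsum
  · have hneg := Multiset.sum_lt_sum_of_nonempty (g := fun _ ↦ (0 : ℝ)) h0 hroots
    have him := Complex.im_multiset_sum (q.roots.map fun r ↦ 1 / (z - r))
    rw [hsum, Multiset.map_map, Function.comp_def, Complex.one_im] at him
    rw [Multiset.sum_map_mul_left, ← him] at hneg
    simp at hneg

namespace MvPolynomial

variable {R ι : Type*} [CommSemiring R]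

lemma polynomial_eval_aeval (g : ι → R[X]) (t : R) (p : MvPolynomial ι R) :
    (aeval g p).eval t = eval (fun j ↦ (g j).eval t) p := by
  rw [← Polynomial.coe_aeval_eq_eval, comp_aeval_apply, ← coe_aeval_eq_eval]
  rfl

variable [DecidableEq ι]

noncomputable def sliceAt (v : ι → R) (i : ι) : MvPolynomial ι R →ₐ[R] R[X] :=
  aeval (Function.update (fun j ↦ Polynomial.C (v j)) i Polynomial.X)

lemma eval_sliceAt (v : ι → R) (i : ι) (t : R) (p : MvPolynomial ι R) :
    (sliceAt v i p).eval t = eval (Function.update v i t) p := by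
  simp [sliceAt, polynomial_eval_aeval, Function.apply_update (fun _ ↦ Polynomial.eval t)]

lemma derivative_sliceAt (v : ι → R) (i : ι) (p : MvPolynomial ι R) :
    derivative (sliceAt v i p) = sliceAt v i (pderiv i p) := by
  induction p using MvPolynomial.induction_on with
  | C a => simp [sliceAt]
  | add p q hp hq => simp [hp, hq]
  | mul_X p j hp =>
    rw [map_mul, derivative_mul, hp, pderiv_mul, map_add, map_mul, map_mul]
    rcases eq_or_ne j i with rfl | hj
    · simp [sliceAt, mul_comm]
    · simp [sliceAt, hj, mul_comm]

end MvPolynomial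

lemma Matrix.det_smul_one_add_sum_smul_ne_zero {n ι : Type*} [Fintype n] [DecidableEq n]
    [Fintype ι] {A : ι → Matrix n n ℂ} (hA : ∀ i, (A i).PosSemidef) {s : ℝ} {x : ℂ}
    {z : ι → ℂ} (hx : 0 < s * x.im) (hz : ∀ i, 0 ≤ s * (z i).im) :
    (x • 1 + ∑ i, z i • A i).det ≠ 0 := by
  intro hdet
  obtain ⟨w, hw0, hw⟩ := exists_mulVec_eq_zero_iff.2 hdet
  have hww : 0 < star w ⬝ᵥ w := dotProduct_star_self_pos_iff.2 hw0
  have hwAw : ∀ i, 0 ≤ star w ⬝ᵥ (A i *ᵥ w) := fun i ↦ (hA i).dotProduct_mulVec_nonneg w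
  have hform : star w ⬝ᵥ ((x • 1 + ∑ i, z i • A i) *ᵥ w) =
      x * (star w ⬝ᵥ w) + ∑ i, z i * (star w ⬝ᵥ (A i *ᵥ w)) := by
    simp [add_mulVec, sum_mulVec, dotProduct_sum, smul_mulVec]
  have hpos : 0 < s * (star w ⬝ᵥ ((x • 1 + ∑ i, z i • A i) *ᵥ w)).im := by
    rw [hform, Complex.add_im, Complex.im_sum, Complex.im_mul_of_nonneg hww.le, mul_add,
      Finset.mul_sum, ← mul_assoc]
    refine add_pos_of_pos_of_nonneg (mul_pos hx (Complex.pos_iff.1 hww).1)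
      (Finset.sum_nonneg fun i _ ↦ ?_)
    rw [Complex.im_mul_of_nonneg (hwAw i), ← mul_assoc]
    exact mul_nonneg (hz i) (Complex.nonneg_iff.1 (hwAw i)).1
  simp [hw] at hpos

section

variable {ι : Type*}

def HalfPlaneStable (s : ℝ) (P : MvPolynomial (Option ι) ℂ) : Prop :=
  ∀ v : Option ι → ℂ, 0 < s * (v none).im → (∀ i, 0 ≤ s * (v (some i)).im) →
    MvPolynomial.eval v P ≠ 0

lemma HalfPlaneStable.sub_pderiv [DecidableEq ι] {s : ℝ} {P : MvPolynomial (Option ι) ℂ}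
    (hP : HalfPlaneStable s P) (i : ι) :
    HalfPlaneStable s (P - MvPolynomial.pderiv (some i) P) := by
  intro v hx hz
  have hslice : ∀ t : ℂ, 0 ≤ s * t.im → (MvPolynomial.sliceAt v (some i) P).eval t ≠ 0 := by
    intro t ht
    rw [MvPolynomial.eval_sliceAt]
    refine hP _ (by simpa using hx) fun j ↦ ?_
    rcases eq_or_ne j i with rfl | hj
    · simpa using ht
    · simpa [hj] using hz j
  simpa [MvPolynomial.derivative_sliceAt, MvPolynomial.eval_sliceAt] using
    eval_sub_derivative_ne_zero hslice (hz i)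

lemma HalfPlaneStable.list_prod_apply {s : ℝ}
    {l : List (Module.End ℂ (MvPolynomial (Option ι) ℂ))}
    (hl : ∀ T ∈ l, ∀ Q, HalfPlaneStable s Q → HalfPlaneStable s (T Q))
    {P : MvPolynomial (Option ι) ℂ} (hP : HalfPlaneStable s P) :
    HalfPlaneStable s (l.prod P) := by
  induction l with
  | nil => simpa using hP
  | cons T l ih =>
    rw [List.prod_cons, Module.End.mul_apply]
    exact hl T (by simp) _ (ih fun U hU ↦ hl U (by simp [hU]))

end

lemma HalfPlaneStable.mixedOp {m : ℕ} {s : ℝ} {P : MvPolynomial (Option (Fin m)) ℂ}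
    (hP : HalfPlaneStable s P) : HalfPlaneStable s (mixedOp m P) := by
  refine hP.list_prod_apply ?_
  simp only [List.mem_ofFn, forall_exists_index]
  rintro _ i rfl Q hQ
  simpa using hQ.sub_pderiv i

lemma eval_detPoly {d m : ℕ} (A : Fin m → Matrix (Fin d) (Fin d) ℂ) (v : Option (Fin m) → ℂ) :
    MvPolynomial.eval v (detPoly A) = (v none • 1 + ∑ i, v (some i) • A i).det := by
  rw [detPoly, RingHom.map_det]
  congr 1
  ext j k
  simp [Matrix.one_apply, Matrix.sum_apply, apply_ite]

lemma halfPlaneStable_detPoly {d m : ℕ} {A : Fin m → Matrix (Fin d) (Fin d) ℂ}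
    (hA : ∀ i, (A i).PosSemidef) (s : ℝ) : HalfPlaneStable s (detPoly A) := fun v hx hz ↦ by
  rw [eval_detPoly]
  exact det_smul_one_add_sum_smul_ne_zero hA hx hz

lemma eval_mixedCharPoly {d m : ℕ} (A : Fin m → Matrix (Fin d) (Fin d) ℂ) (z : ℂ) :
    (mixedCharPoly A).eval z =
      MvPolynomial.eval (fun o ↦ o.elim z fun _ ↦ 0) (mixedOp m (detPoly A)) := by
  rw [mixedCharPoly, MvPolynomial.polynomial_eval_aeval]
  congr 2
  ext (_ | _) <;> simp

/-- **Mixed characteristic polynomials are real-rooted.**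
If `A₁, …, A_m` are Hermitian positive semidefinite `d × d` complex matrices,
then every (complex) root of `μ[A₁,…,A_m]` is real. -/
theorem mixedCharPoly_real_rooted
    {d m : ℕ} (A : Fin m → Matrix (Fin d) (Fin d) ℂ)
    (hA : ∀ i, (A i).PosSemidef) :
    ∀ z ∈ (mixedCharPoly A).roots, z.im = 0 := by
  intro z hz
  by_contra him
  have hstable := (halfPlaneStable_detPoly hA z.im).mixedOp
  refine hstable (fun o ↦ o.elim z fun _ ↦ 0) (by simpa using mul_self_pos.2 him) (by simp) ?_
  rw [← eval_mixedCharPoly]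
  exact isRoot_of_mem_roots hz
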